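/- arXiv:1401.3726 — 5 statements merged into one kernel-verified Lean document; each statement's English description precedes it below -/
import Mathlib

section
/- Let (Λ, ℒ, ℓ) be a probability space with ℓ atomless, and let {D_n : n ∈ ℕ} be a countable family of sets in ℒ. Then there exists a countably generated σ-algebra 𝒟 ⊆ ℒ such that each D_n belongs to 𝒟 and the restriction of ℓ to 𝒟 is atomless. -/
/-!
Halving a set of positive measure over and over yields subsets of arbitrarily small positive
measure, and an exhaustion argument (a countable family of small sets whose union has maximal
measure) then covers the whole space, up to a null set, by countably many sets of measure at most
`ε`. Adding such covers for `ε = 2⁻¹ ^ n`, `n ∈ ℕ`, to the `D n` gives countably many generators,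
and the generated σ-algebra is atomless: a set `L` with `0 < ℓ L` meets some cover element of
measure `< ℓ L` in positive measure.
-/

open MeasureTheory Set ENNReal

section

variable {α : Type*}

/-- Atoms in the measure-theoretic sense; Mathlib's `NoAtoms` only concerns singletons. -/
def IsAtomlessOn (m : MeasurableSpace α) {m0 : MeasurableSpace α} (μ : Measure[m0] α) : Prop :=
  ∀ s, MeasurableSet[m] s → 0 < μ s → ∃ t, MeasurableSet[m] t ∧ t ⊆ s ∧ 0 < μ t ∧ μ t < μ s

namespace IsAtomlessOn

variable [mα : MeasurableSpace α] {μ : Measure α} {s : Set α}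

theorem exists_subset_measure_pos_le_half (hμ : IsAtomlessOn mα μ) (hs : MeasurableSet s)
    (hs₀ : 0 < μ s) : ∃ t ⊆ s, MeasurableSet t ∧ 0 < μ t ∧ μ t ≤ μ s / 2 := by
  obtain ⟨t, ht, hts, ht₀, hlt⟩ := hμ s hs hs₀
  by_cases hle : μ t ≤ μ s / 2
  · exact ⟨t, hts, ht, ht₀, hle⟩
  have hs_fin : μ s ≠ ∞ := fun h => hle (by rw [h, top_div_of_ne_top ofNat_ne_top]; exact le_top)
  have hdiff : μ (s \ t) = μ s - μ t := measure_sdiff hts ht.nullMeasurableSet (ne_top_of_lt hlt)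
  refine ⟨s \ t, sdiff_subset, hs.diff ht, by rw [hdiff]; exact tsub_pos_of_lt hlt, ?_⟩
  calc μ (s \ t) = μ s - μ t := hdiff
    _ ≤ μ s - μ s / 2 := tsub_le_tsub_left (not_le.mp hle).le _
    _ = μ s / 2 := ENNReal.sub_half hs_fin

theorem exists_subset_measure_pos_le (hμ : IsAtomlessOn mα μ) (hs : MeasurableSet s)
    (hs₀ : 0 < μ s) (hs_fin : μ s ≠ ∞) {ε : ℝ≥0∞} (hε : 0 < ε) :
    ∃ t ⊆ s, MeasurableSet t ∧ 0 < μ t ∧ μ t ≤ ε := by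
  have halving : ∀ n : ℕ, ∃ t ⊆ s, MeasurableSet t ∧ 0 < μ t ∧ μ t ≤ μ s * 2⁻¹ ^ n := by
    intro n
    induction n with
    | zero => exact ⟨s, subset_rfl, hs, hs₀, by simp⟩
    | succ n ih =>
      obtain ⟨t, hts, ht, ht₀, hle⟩ := ih
      obtain ⟨u, hut, hu, hu₀, hu_le⟩ := hμ.exists_subset_measure_pos_le_half ht ht₀
      refine ⟨u, hut.trans hts, hu, hu₀, hu_le.trans ?_⟩
      rw [pow_succ, ← mul_assoc, ← div_eq_mul_inv]
      exact ENNReal.div_le_div_right hle 2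
  obtain ⟨n, hn⟩ := ENNReal.exists_inv_two_pow_lt (ENNReal.div_pos hε.ne' hs_fin).ne'
  obtain ⟨t, hts, ht, ht₀, hle⟩ := halving n
  refine ⟨t, hts, ht, ht₀, hle.trans ?_⟩
  rw [mul_comm]
  exact (ENNReal.lt_div_iff_mul_lt (Or.inl hs₀.ne') (Or.inl hs_fin)).mp hn |>.le

/-- Exhaustion: a countable family of small sets whose union has maximal measure leaves a null
complement, since otherwise a small subset of the complement could be added to it. -/
theorem exists_countable_cover_measure_le [IsFiniteMeasure μ] (hμ : IsAtomlessOn mα μ)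
    {ε : ℝ≥0∞} (hε : 0 < ε) :
    ∃ S : Set (Set α), S.Countable ∧ (∀ t ∈ S, MeasurableSet t ∧ μ t ≤ ε) ∧ μ (⋃₀ S)ᶜ = 0 := by
  set 𝒜 : Set (Set (Set α)) := {S | S.Countable ∧ ∀ t ∈ S, MeasurableSet t ∧ μ t ≤ ε}
  set V : Set ℝ≥0∞ := (fun S => μ (⋃₀ S)) '' 𝒜
  have hempty : (∅ : Set (Set α)) ∈ 𝒜 := ⟨countable_empty, by simp⟩
  obtain ⟨u, -, hu_lim, hu_mem⟩ :=
    exists_seq_tendsto_sSup ⟨_, mem_image_of_mem _ hempty⟩ (OrderTop.bddAbove V)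
  choose S hS hSu using hu_mem
  set T := ⋃ n, S n
  have hT : T ∈ 𝒜 :=
    ⟨countable_iUnion fun n => (hS n).1, fun t ht => by
      obtain ⟨n, hn⟩ := mem_iUnion.mp ht
      exact (hS n).2 t hn⟩
  have hT_meas : MeasurableSet (⋃₀ T) := MeasurableSet.sUnion hT.1 fun t ht => (hT.2 t ht).1
  have hT_max : sSup V ≤ μ (⋃₀ T) :=
    le_of_tendsto' hu_lim fun n => hSu n ▸ measure_mono (sUnion_mono (subset_iUnion S n))
  refine ⟨T, hT.1, hT.2, ?_⟩
  by_contra hne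
  obtain ⟨b, hb, hb_meas, hb₀, hbε⟩ :=
    hμ.exists_subset_measure_pos_le hT_meas.compl (pos_iff_ne_zero.mpr hne) (measure_ne_top _ _) hε
  have hbT : insert b T ∈ 𝒜 :=
    ⟨hT.1.insert b, by simpa only [forall_mem_insert] using ⟨⟨hb_meas, hbε⟩, hT.2⟩⟩
  have hgrow : μ (⋃₀ insert b T) = μ (⋃₀ T) + μ b := by
    rw [sUnion_insert, measure_union (disjoint_compl_left.mono_left hb) hT_meas, add_comm]
  have : μ (⋃₀ insert b T) ≤ sSup V := le_sSup (mem_image_of_mem _ hbT)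
  rw [hgrow] at this
  exact (ENNReal.lt_add_right (measure_ne_top _ _) hb₀.ne').not_ge (this.trans hT_max)

end IsAtomlessOn

theorem isAtomlessOn_of_forall_countable_cover (m : MeasurableSpace α) {m0 : MeasurableSpace α}
    {μ : Measure[m0] α}
    (hcover : ∀ ε > 0, ∃ S : Set (Set α), S.Countable ∧
      (∀ t ∈ S, MeasurableSet[m] t ∧ μ t ≤ ε) ∧ μ (⋃₀ S)ᶜ = 0) :
    IsAtomlessOn m μ := by
  intro s hs hs₀
  obtain ⟨ε, hε₀, hεs⟩ := exists_between hs₀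
  obtain ⟨S, hS, hS_small, hS_cover⟩ := hcover ε hε₀
  have hmeets : ∃ t ∈ S, 0 < μ (s ∩ t) := by
    by_contra! h
    have hsub : s ⊆ (⋃ t ∈ S, s ∩ t) ∪ (⋃₀ S)ᶜ := fun x hx => by
      by_cases hxS : x ∈ ⋃₀ S
      · obtain ⟨t, ht, hxt⟩ := hxS
        exact Or.inl (mem_biUnion ht ⟨hx, hxt⟩)
      · exact Or.inr hxS
    refine hs₀.ne' (measure_mono_null hsub (measure_union_null ?_ hS_cover))
    exact (measure_biUnion_null_iff hS).mpr fun t ht => nonpos_iff_eq_zero.mp (h t ht)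
  obtain ⟨t, ht, hst₀⟩ := hmeets
  refine ⟨s ∩ t, hs.inter (hS_small t ht).1, inter_subset_left, hst₀, ?_⟩
  exact ((measure_mono inter_subset_right).trans (hS_small t ht).2).trans_lt hεs

end

theorem stmt_5 {Λ : Type*} [mΛ : MeasurableSpace Λ] (ℓ : Measure Λ) [IsProbabilityMeasure ℓ]
    (hatomless : ∀ L : Set Λ, MeasurableSet L → 0 < ℓ L →
      ∃ L' : Set Λ, MeasurableSet L' ∧ L' ⊆ L ∧ 0 < ℓ L' ∧ ℓ L' < ℓ L)
    (D : ℕ → Set Λ) (hD : ∀ n, MeasurableSet (D n)) :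
    ∃ m : MeasurableSpace Λ, m ≤ mΛ ∧
      (∃ S : Set (Set Λ), S.Countable ∧ m = MeasurableSpace.generateFrom S) ∧
      (∀ n, MeasurableSet[m] (D n)) ∧
      (∀ L : Set Λ, MeasurableSet[m] L → 0 < ℓ L →
        ∃ L' : Set Λ, MeasurableSet[m] L' ∧ L' ⊆ L ∧ 0 < ℓ L' ∧ ℓ L' < ℓ L) := by
  have hℓ : IsAtomlessOn mΛ ℓ := hatomless
  choose C hC_count hC_small hC_cover using fun n : ℕ =>
    hℓ.exists_countable_cover_measure_le (ε := 2⁻¹ ^ n) (ENNReal.pow_pos (by simp) n)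
  set S := range D ∪ ⋃ n, C n
  have hS_gen : ∀ t ∈ S, MeasurableSet[MeasurableSpace.generateFrom S] t :=
    fun t ht => MeasurableSpace.measurableSet_generateFrom ht
  refine ⟨.generateFrom S, ?_, ⟨S, (countable_range D).union (countable_iUnion hC_count), rfl⟩,
    fun n => hS_gen _ (.inl (mem_range_self n)), ?_⟩
  · refine MeasurableSpace.generateFrom_le ?_
    rintro t (⟨n, rfl⟩ | ht)
    · exact hD n
    · obtain ⟨n, hn⟩ := mem_iUnion.mp ht
      exact (hC_small n t hn).1
  · refine isAtomlessOn_of_forall_countable_cover _ fun ε hε => ?_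
    obtain ⟨n, hn⟩ := ENNReal.exists_inv_two_pow_lt hε.ne'
    refine ⟨C n, hC_count n, fun t ht => ⟨hS_gen t (.inr (mem_iUnion_of_mem n ht)), ?_⟩,
      hC_cover n⟩
    exact (hC_small n t ht).2.trans hn.le
end

section
/- Let p be a probability measure on (X_a,𝒳_a)⊗(X_b,𝒳_b)⊗(Y,𝒴)⊗(Λ,ℒ). If p satisfies parameter independence (p[J_a‖𝒴⊗ℒ] = p[J_a‖𝒴_a⊗ℒ] a.s. for all J_a ∈ 𝒳_a, and symmetrically for b) and outcome independence (p[J_a × J_b‖𝒴⊗ℒ] = p[J_a‖𝒴⊗ℒ]·p[J_b‖𝒴⊗ℒ] a.s.), then p satisfies locality: p[J_a × J_b‖𝒴⊗ℒ] = p[J_a‖𝒴_a⊗ℒ]·p[J_b‖𝒴_b⊗ℒ] a.s. for all J_a ∈ 𝒳_a, J_b ∈ 𝒳_b. -/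
open MeasureTheory

theorem stmt_11 {Xa Xb Ya Yb Λ : Type*}
    [MeasurableSpace Xa] [MeasurableSpace Xb] [MeasurableSpace Ya] [MeasurableSpace Yb]
    [MeasurableSpace Λ]
    (p : Measure (Xa × Xb × (Ya × Yb) × Λ)) [IsProbabilityMeasure p]
    -- sub-σ-algebras 𝒴 ⊗ ℒ, 𝒴_a ⊗ ℒ, 𝒴_b ⊗ ℒ
    (mYL mYaL mYbL : MeasurableSpace (Xa × Xb × (Ya × Yb) × Λ))
    (hYL : mYL = MeasurableSpace.comap (fun ω => ω.2.2) inferInstance)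
    (hYaL : mYaL = MeasurableSpace.comap (fun ω => (ω.2.2.1.1, ω.2.2.2)) inferInstance)
    (hYbL : mYbL = MeasurableSpace.comap (fun ω => (ω.2.2.1.2, ω.2.2.2)) inferInstance)
    -- parameter independence
    (hPIa : ∀ Ja : Set Xa, MeasurableSet Ja →
      p[Set.indicator {w : Xa × Xb × (Ya × Yb) × Λ | w.1 ∈ Ja} (fun _ => (1 : ℝ)) | mYL]
        =ᵐ[p]
      p[Set.indicator {w : Xa × Xb × (Ya × Yb) × Λ | w.1 ∈ Ja} (fun _ => (1 : ℝ)) | mYaL])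
    (hPIb : ∀ Jb : Set Xb, MeasurableSet Jb →
      p[Set.indicator {w : Xa × Xb × (Ya × Yb) × Λ | w.2.1 ∈ Jb} (fun _ => (1 : ℝ)) | mYL]
        =ᵐ[p]
      p[Set.indicator {w : Xa × Xb × (Ya × Yb) × Λ | w.2.1 ∈ Jb} (fun _ => (1 : ℝ)) | mYbL])
    -- outcome independence
    (hOI : ∀ (Ja : Set Xa) (Jb : Set Xb), MeasurableSet Ja → MeasurableSet Jb →
      p[Set.indicator {w : Xa × Xb × (Ya × Yb) × Λ | w.1 ∈ Ja ∧ w.2.1 ∈ Jb}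
          (fun _ => (1 : ℝ)) | mYL]
        =ᵐ[p]
      (fun ω =>
        (p[Set.indicator {w : Xa × Xb × (Ya × Yb) × Λ | w.1 ∈ Ja} (fun _ => (1 : ℝ)) | mYL]) ω *
        (p[Set.indicator {w : Xa × Xb × (Ya × Yb) × Λ | w.2.1 ∈ Jb} (fun _ => (1 : ℝ)) | mYL]) ω)) :
    -- locality
    ∀ (Ja : Set Xa) (Jb : Set Xb), MeasurableSet Ja → MeasurableSet Jb →
      p[Set.indicator {w : Xa × Xb × (Ya × Yb) × Λ | w.1 ∈ Ja ∧ w.2.1 ∈ Jb}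
          (fun _ => (1 : ℝ)) | mYL]
        =ᵐ[p]
      (fun ω =>
        (p[Set.indicator {w : Xa × Xb × (Ya × Yb) × Λ | w.1 ∈ Ja} (fun _ => (1 : ℝ)) | mYaL]) ω *
        (p[Set.indicator {w : Xa × Xb × (Ya × Yb) × Λ | w.2.1 ∈ Jb} (fun _ => (1 : ℝ)) | mYbL]) ω) := by
  intro Ja Jb hJa hJb
  filter_upwards [hOI Ja Jb hJa hJb, hPIa Ja hJa, hPIb Jb hJb] with ω h1 h2 h3
  rw [h1, h2, h3]
end

section
/- Let p be a probability measure on (X_a,𝒳_a)⊗(X_b,𝒳_b)⊗(Y,𝒴)⊗(Λ,ℒ) satisfying strong determinism: for all J_a ∈ 𝒳_a, p[J_a‖𝒴_a⊗ℒ] ∈ {0,1} p-almost surely, and symmetrically for b. Then p satisfies parameter independence: p[J_a‖𝒴⊗ℒ] = p[J_a‖𝒴_a⊗ℒ] p-almost surely for all J_a ∈ 𝒳_a (and symmetrically for b). -/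
/-!
A `[0,1]`-valued integrable `f` whose conditional expectation `g = μ[f|m]` takes only the
values `0` and `1` is almost surely equal to `g`: on the `m`-measurable set `{g = 1}` the
function `g - f ≥ 0` has integral zero, and on its complement so does `f - g = f ≥ 0`.
Hence `𝟙_J` is a.s. equal to the `𝒴_a ⊗ ℒ`-measurable `p[𝟙_J ‖ 𝒴_a ⊗ ℒ]`, and conditioning it on
the finer `𝒴 ⊗ ℒ` changes nothing.
-/

open MeasureTheory

namespace MeasureTheory

variable {Ω : Type*} {m m' m0 : MeasurableSpace Ω} {μ : Measure Ω} [IsFiniteMeasure μ]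
  {f : Ω → ℝ}

lemma setIntegral_condExp_sub_eq_zero (hm : m ≤ m0) (hf : Integrable f μ) {s : Set Ω}
    (hs : MeasurableSet[m] s) : ∫ ω in s, (μ[f|m] ω - f ω) ∂μ = 0 := by
  rw [integral_sub integrable_condExp.integrableOn hf.integrableOn, setIntegral_condExp hm hf hs,
    sub_self]

lemma ae_eq_condExp_of_condExp_mem_zero_one (hm : m ≤ m0) (hf : Integrable f μ)
    (hf01 : ∀ᵐ ω ∂μ, f ω ∈ Set.Icc (0 : ℝ) 1)
    (hg01 : ∀ᵐ ω ∂μ, μ[f|m] ω ∈ ({0, 1} : Set ℝ)) : f =ᵐ[μ] μ[f|m] := by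
  set g := μ[f|m]
  set A := g ⁻¹' {1}
  have hA : MeasurableSet[m] A := stronglyMeasurable_condExp.measurable (measurableSet_singleton 1)
  have hg_int : Integrable g μ := integrable_condExp
  have on_A : f =ᵐ[μ.restrict A] g := by
    have hg1 : ∀ᵐ ω ∂μ.restrict A, g ω = 1 := ae_restrict_mem (hm _ hA)
    have hnonneg : 0 ≤ᵐ[μ.restrict A] fun ω => g ω - f ω := by
      filter_upwards [ae_restrict_of_ae hf01, hg1] with ω hf hg
      simpa [hg] using hf.2
    have hzero := (setIntegral_eq_zero_iff_of_nonneg_ae hnonneg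
      (hg_int.sub hf).integrableOn).1 (setIntegral_condExp_sub_eq_zero hm hf hA)
    filter_upwards [hzero] with ω h
    simpa [sub_eq_zero, eq_comm] using h
  have on_compl : f =ᵐ[μ.restrict Aᶜ] g := by
    have hg0 : ∀ᵐ ω ∂μ.restrict Aᶜ, g ω = 0 := by
      filter_upwards [ae_restrict_of_ae hg01, ae_restrict_mem (hm _ hA.compl)] with ω hg hω
      exact hg.resolve_right hω
    have hnonneg : 0 ≤ᵐ[μ.restrict Aᶜ] fun ω => f ω - g ω := by
      filter_upwards [ae_restrict_of_ae hf01, hg0] with ω hf hg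
      simpa [hg] using hf.1
    have hint : ∫ ω in Aᶜ, (f ω - g ω) ∂μ = 0 := by
      rw [← neg_eq_zero, ← integral_neg]
      simpa using setIntegral_condExp_sub_eq_zero hm hf hA.compl
    have hzero := (setIntegral_eq_zero_iff_of_nonneg_ae hnonneg (hf.sub hg_int).integrableOn).1 hint
    filter_upwards [hzero] with ω h
    simpa [sub_eq_zero] using h
  exact ae_of_ae_restrict_of_ae_restrict_compl A on_A on_compl

lemma condExp_ae_eq_condExp_of_condExp_mem_zero_one (hm' : m' ≤ m) (hm : m ≤ m0)
    (hf : Integrable f μ) (hf01 : ∀ᵐ ω ∂μ, f ω ∈ Set.Icc (0 : ℝ) 1)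
    (hg01 : ∀ᵐ ω ∂μ, μ[f|m'] ω ∈ ({0, 1} : Set ℝ)) : μ[f|m] =ᵐ[μ] μ[f|m'] :=
  calc μ[f|m] =ᵐ[μ] μ[μ[f|m']|m] :=
        condExp_congr_ae (ae_eq_condExp_of_condExp_mem_zero_one (hm'.trans hm) hf hf01 hg01)
    _ = μ[f|m'] :=
        condExp_of_stronglyMeasurable hm (stronglyMeasurable_condExp.mono hm') integrable_condExp

lemma condExp_indicator_one_ae_eq_of_mem_zero_one (hm' : m' ≤ m) (hm : m ≤ m0) {s : Set Ω}
    (hs : MeasurableSet[m0] s)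
    (hg01 : ∀ᵐ ω ∂μ, μ[s.indicator (fun _ => (1 : ℝ))|m'] ω ∈ ({0, 1} : Set ℝ)) :
    μ[s.indicator (fun _ => (1 : ℝ))|m] =ᵐ[μ] μ[s.indicator (fun _ => (1 : ℝ))|m'] := by
  refine condExp_ae_eq_condExp_of_condExp_mem_zero_one hm' hm
    ((integrable_const 1).indicator hs) (ae_of_all _ fun ω => ?_) hg01
  by_cases hω : ω ∈ s <;> simp [hω]

end MeasureTheory

theorem stmt_12 {Xa Xb Ya Yb Λ : Type*}
    [MeasurableSpace Xa] [MeasurableSpace Xb] [MeasurableSpace Ya] [MeasurableSpace Yb]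
    [MeasurableSpace Λ]
    (p : Measure (Xa × Xb × (Ya × Yb) × Λ)) [IsProbabilityMeasure p]
    (mYL mYaL mYbL : MeasurableSpace (Xa × Xb × (Ya × Yb) × Λ))
    (hYL : mYL = MeasurableSpace.comap (fun ω => ω.2.2) inferInstance)
    (hYaL : mYaL = MeasurableSpace.comap (fun ω => (ω.2.2.1.1, ω.2.2.2)) inferInstance)
    (hYbL : mYbL = MeasurableSpace.comap (fun ω => (ω.2.2.1.2, ω.2.2.2)) inferInstance)
    -- strong determinism
    (hSDa : ∀ Ja : Set Xa, MeasurableSet Ja →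
      ∀ᵐ ω ∂p,
        (p[Set.indicator {w : Xa × Xb × (Ya × Yb) × Λ | w.1 ∈ Ja} (fun _ => (1 : ℝ)) | mYaL]) ω
          ∈ ({0, 1} : Set ℝ))
    (hSDb : ∀ Jb : Set Xb, MeasurableSet Jb →
      ∀ᵐ ω ∂p,
        (p[Set.indicator {w : Xa × Xb × (Ya × Yb) × Λ | w.2.1 ∈ Jb} (fun _ => (1 : ℝ)) | mYbL]) ω
          ∈ ({0, 1} : Set ℝ)) :
    -- parameter independence
    (∀ Ja : Set Xa, MeasurableSet Ja →
      p[Set.indicator {w : Xa × Xb × (Ya × Yb) × Λ | w.1 ∈ Ja} (fun _ => (1 : ℝ)) | mYL]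
        =ᵐ[p]
      p[Set.indicator {w : Xa × Xb × (Ya × Yb) × Λ | w.1 ∈ Ja} (fun _ => (1 : ℝ)) | mYaL]) ∧
    (∀ Jb : Set Xb, MeasurableSet Jb →
      p[Set.indicator {w : Xa × Xb × (Ya × Yb) × Λ | w.2.1 ∈ Jb} (fun _ => (1 : ℝ)) | mYL]
        =ᵐ[p]
      p[Set.indicator {w : Xa × Xb × (Ya × Yb) × Λ | w.2.1 ∈ Jb} (fun _ => (1 : ℝ)) | mYbL]) := by
  have hYL_le : mYL ≤ Prod.instMeasurableSpace := by
    rw [hYL]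
    exact measurable_snd.snd.comap_le
  have hYaL_le : mYaL ≤ mYL := by
    rw [hYaL, hYL]
    exact MeasurableSpace.comap_le_comap_of_eq_comp _ (measurable_fst.fst.prodMk measurable_snd) rfl
  have hYbL_le : mYbL ≤ mYL := by
    rw [hYbL, hYL]
    exact MeasurableSpace.comap_le_comap_of_eq_comp _ (measurable_fst.snd.prodMk measurable_snd) rfl
  exact ⟨fun Ja hJa => condExp_indicator_one_ae_eq_of_mem_zero_one hYaL_le hYL_le
      (measurable_fst hJa) (hSDa Ja hJa),
    fun Jb hJb => condExp_indicator_one_ae_eq_of_mem_zero_one hYbL_le hYL_le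
      (measurable_snd.fst hJb) (hSDb Jb hJb)⟩
end

section
/- Let p be a probability measure on (X_a,𝒳_a)⊗(X_b,𝒳_b)⊗(Y,𝒴)⊗(Λ,ℒ) satisfying weak determinism: for all J_a ∈ 𝒳_a, J_b ∈ 𝒳_b, p[J_a × J_b‖𝒴⊗ℒ] ∈ {0,1} p-almost surely. Then p satisfies outcome independence: p[J_a × J_b‖𝒴⊗ℒ] = p[J_a‖𝒴⊗ℒ]·p[J_b‖𝒴⊗ℒ] p-almost surely. -/
open MeasureTheory ProbabilityTheory

/-!
A random variable with values in {0, 1} whose conditional expectation `g` is also {0, 1}-valued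
has conditional variance `g - g² = 0`, so it coincides a.e. with `g`: it is measurable for the
conditioning σ-algebra up to null sets. Weak determinism applied with `J_b = X_b` and with
`J_a = X_a` puts the indicators of the single-outcome events in this situation, so their product,
the indicator of `J_a × J_b`, is its own conditional expectation and equals the product of the
two conditional probabilities.
-/

section
variable {Ω : Type*} {m m₀ : MeasurableSpace Ω} {μ : Measure[m₀] Ω} {X Y : Ω → ℝ}

theorem ae_eq_condExp_of_condVar_ae_eq_zero (hm : m ≤ m₀) [IsFiniteMeasure μ] (hX : MemLp X 2 μ)
    (hVar : Var[X; μ | m] =ᵐ[μ] 0) : X =ᵐ[μ] μ[X | m] := by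
  have hint : Integrable ((X - μ[X | m]) ^ 2) μ := (hX.sub (hX.condExp one_le_two)).integrable_sq
  have hzero : ∫ ω, ((X - μ[X | m]) ^ 2) ω ∂μ = 0 := by
    rw [← integral_condExp hm]
    exact integral_eq_zero_of_ae hVar
  filter_upwards [(integral_eq_zero_iff_of_nonneg (fun ω => sq_nonneg _) hint).1 hzero] with ω hω
  simpa [sub_eq_zero] using hω

theorem ae_eq_condExp_of_condExp_zero_or_one (hm : m ≤ m₀) [IsFiniteMeasure μ]
    (hXmeas : AEStronglyMeasurable X μ) (hX : ∀ᵐ ω ∂μ, X ω = 0 ∨ X ω = 1)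
    (hcond : ∀ᵐ ω ∂μ, μ[X | m] ω = 0 ∨ μ[X | m] ω = 1) : X =ᵐ[μ] μ[X | m] := by
  have hXL2 : MemLp X 2 μ := .of_bound hXmeas 1 <| by
    filter_upwards [hX]; rintro ω (hω | hω) <;> simp [hω]
  have hsq : μ[X ^ 2 | m] =ᵐ[μ] μ[X | m] := condExp_congr_ae <| by
    filter_upwards [hX]; rintro ω (hω | hω) <;> simp [hω]
  refine ae_eq_condExp_of_condVar_ae_eq_zero hm hXL2 ?_
  filter_upwards [condVar_ae_eq_condExp_sq_sub_sq_condExp hm hXL2, hsq, hcond]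
    with ω hVar hsqω hcondω
  rcases hcondω with h | h <;> simp [hVar, hsqω, h]

theorem indicator_ae_eq_condExp_of_condExp_zero_or_one (hm : m ≤ m₀) [IsFiniteMeasure μ]
    {A : Set Ω} (hA : MeasurableSet A)
    (hcond : ∀ᵐ ω ∂μ, μ[A.indicator (fun _ => (1 : ℝ)) | m] ω = 0 ∨
      μ[A.indicator (fun _ => (1 : ℝ)) | m] ω = 1) :
    A.indicator (fun _ => (1 : ℝ)) =ᵐ[μ] μ[A.indicator (fun _ => (1 : ℝ)) | m] :=
  ae_eq_condExp_of_condExp_zero_or_one hm (aestronglyMeasurable_one.indicator hA)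
    (ae_of_all _ fun ω => by by_cases h : ω ∈ A <;> simp [h]) hcond

theorem condExp_mul_ae_eq_of_ae_eq_condExp (hm : m ≤ m₀) [SigmaFinite (μ.trim hm)]
    (hX : X =ᵐ[μ] μ[X | m]) (hY : Y =ᵐ[μ] μ[Y | m]) (hXY : Integrable (X * Y) μ) :
    μ[X * Y | m] =ᵐ[μ] μ[X | m] * μ[Y | m] := by
  have hprod : X * Y =ᵐ[μ] μ[X | m] * μ[Y | m] := hX.mul hY
  calc μ[X * Y | m]
      =ᵐ[μ] X * Y := condExp_of_aestronglyMeasurable' hm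
        ⟨_, stronglyMeasurable_condExp.mul stronglyMeasurable_condExp, hprod⟩ hXY
    _ =ᵐ[μ] μ[X | m] * μ[Y | m] := hprod

end

theorem stmt_13 {Xa Xb Ya Yb Λ : Type*}
    [MeasurableSpace Xa] [MeasurableSpace Xb] [MeasurableSpace Ya] [MeasurableSpace Yb]
    [MeasurableSpace Λ]
    (p : Measure (Xa × Xb × (Ya × Yb) × Λ)) [IsProbabilityMeasure p]
    (mYL : MeasurableSpace (Xa × Xb × (Ya × Yb) × Λ))
    (hYL : mYL = MeasurableSpace.comap (fun ω => ω.2.2) inferInstance)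
    -- weak determinism
    (hWD : ∀ (Ja : Set Xa) (Jb : Set Xb), MeasurableSet Ja → MeasurableSet Jb →
      ∀ᵐ ω ∂p,
        (p[Set.indicator {w : Xa × Xb × (Ya × Yb) × Λ | w.1 ∈ Ja ∧ w.2.1 ∈ Jb}
            (fun _ => (1 : ℝ)) | mYL]) ω ∈ ({0, 1} : Set ℝ)) :
    -- outcome independence
    ∀ (Ja : Set Xa) (Jb : Set Xb), MeasurableSet Ja → MeasurableSet Jb →
      p[Set.indicator {w : Xa × Xb × (Ya × Yb) × Λ | w.1 ∈ Ja ∧ w.2.1 ∈ Jb}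
          (fun _ => (1 : ℝ)) | mYL]
        =ᵐ[p]
      (fun ω =>
        (p[Set.indicator {w : Xa × Xb × (Ya × Yb) × Λ | w.1 ∈ Ja} (fun _ => (1 : ℝ)) | mYL]) ω *
        (p[Set.indicator {w : Xa × Xb × (Ya × Yb) × Λ | w.2.1 ∈ Jb} (fun _ => (1 : ℝ)) | mYL]) ω) := by
  intro Ja Jb hJa hJb
  have hm : mYL ≤ Prod.instMeasurableSpace := hYL ▸ (measurable_snd.comp measurable_snd).comap_le
  have hA := indicator_ae_eq_condExp_of_condExp_zero_or_one (A := {w | w.1 ∈ Ja}) hm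
    (measurable_fst hJa) (by simpa using hWD Ja Set.univ hJa .univ)
  have hB := indicator_ae_eq_condExp_of_condExp_zero_or_one (A := {w | w.2.1 ∈ Jb}) hm
    (measurable_snd.fst hJb) (by simpa using hWD Set.univ Jb .univ hJb)
  have hAB : {w : Xa × Xb × (Ya × Yb) × Λ | w.1 ∈ Ja ∧ w.2.1 ∈ Jb}.indicator (fun _ => (1 : ℝ)) =
      {w | w.1 ∈ Ja}.indicator (fun _ => 1) * {w | w.2.1 ∈ Jb}.indicator (fun _ => 1) :=
    Set.inter_indicator_one
  rw [hAB]
  exact condExp_mul_ae_eq_of_ae_eq_condExp hm hA hB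
    (hAB ▸ (integrable_const 1).indicator ((measurable_fst hJa).inter (measurable_snd.fst hJb)))
end

section
/- Let p be a probability measure on (X,𝒳)⊗(Y,𝒴)⊗(Λ,ℒ), let 𝒟 ⊆ ℒ be a sub-σ-algebra, and suppose that for every J ∈ 𝒳 and K ∈ 𝒴 the function λ ↦ p[J × K‖ℒ]_λ is 𝒟-measurable (for some fixed version). Then for every J ∈ 𝒳, p[J‖𝒴⊗ℒ] = p[J‖𝒴⊗𝒟] p-almost surely. -/
/-!
The hypothesis says that the pair `(x, y)` is conditionally independent of `ℒ` given `𝒟`: for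
`K ∈ 𝒴` both `E[1_K | ℒ]` and `E[1_J 1_K | ℒ]` are `𝒟`-measurable. Conditional independence is
symmetric, so `E[1_L | 𝒴 ⊔ 𝒟] = E[1_L | 𝒟]` for `L ∈ ℒ`. With this, `E[1_J | 𝒴 ⊔ 𝒟]` is seen to
have the same integrals as `1_J` over the sets `K ∩ L` (`K ∈ 𝒴`, `L ∈ ℒ`), a π-system generating
`𝒴 ⊔ ℒ`; every step moves a conditional expectation across a product using
`∫ c · E[u | m] = ∫ c · u` for `m`-measurable `c`.
-/

open MeasureTheory MeasurableSpace

namespace MeasureTheory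

section PiSystem

variable {α : Type*}

theorem isPiSystem_image2_inter (m₁ m₂ : MeasurableSpace α) :
    IsPiSystem (Set.image2 (· ∩ ·) {s | MeasurableSet[m₁] s} {t | MeasurableSet[m₂] t}) := by
  rintro _ ⟨s₁, hs₁, t₁, ht₁, rfl⟩ _ ⟨s₂, hs₂, t₂, ht₂, rfl⟩ -
  exact ⟨s₁ ∩ s₂, hs₁.inter hs₂, t₁ ∩ t₂, ht₁.inter ht₂, Set.inter_inter_inter_comm _ _ _ _⟩

theorem sup_eq_generateFrom_image2_inter (m₁ m₂ : MeasurableSpace α) :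
    m₁ ⊔ m₂ = generateFrom (Set.image2 (· ∩ ·) {s | MeasurableSet[m₁] s}
      {t | MeasurableSet[m₂] t}) := by
  refine le_antisymm (sup_le (fun s hs ↦ ?_) (fun t ht ↦ ?_)) (generateFrom_le ?_)
  · exact measurableSet_generateFrom ⟨s, hs, Set.univ, .univ, Set.inter_univ s⟩
  · exact measurableSet_generateFrom ⟨Set.univ, .univ, t, ht, Set.univ_inter t⟩
  · rintro _ ⟨s, hs, t, ht, rfl⟩
    exact (le_sup_left (b := m₂) s hs).inter (le_sup_right (a := m₁) t ht)

end PiSystem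

section Integral

variable {α E : Type*} [NormedAddCommGroup E] [NormedSpace ℝ E]
  {m m₁ m₂ m0 : MeasurableSpace α} {μ : Measure α}

theorem setIntegral_eq_setIntegral_of_isPiSystem (hm : m ≤ m0) {S : Set (Set α)}
    (hgen : m = generateFrom S) (hS : IsPiSystem S) {f g : α → E}
    (hf : Integrable f μ) (hg : Integrable g μ)
    (hbasic : ∀ s ∈ S, ∫ x in s, f x ∂μ = ∫ x in s, g x ∂μ)
    (huniv : ∫ x, f x ∂μ = ∫ x, g x ∂μ) :
    ∀ s, MeasurableSet[m] s → ∫ x in s, f x ∂μ = ∫ x in s, g x ∂μ := by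
  refine induction_on_inter hgen hS (by simp) hbasic (fun t ht ih ↦ ?_) (fun t htd ht ih ↦ ?_)
  · rw [setIntegral_compl (hm t ht) hf, setIntegral_compl (hm t ht) hg, ih, huniv]
  · have ht₀ i : MeasurableSet (t i) := hm _ (ht i)
    rw [integral_iUnion ht₀ htd hf.integrableOn, integral_iUnion ht₀ htd hg.integrableOn]
    exact tsum_congr ih

theorem ae_eq_condExp_sup_of_forall_setIntegral_inter_eq [CompleteSpace E] [IsFiniteMeasure μ]
    (hm₁ : m₁ ≤ m0) (hm₂ : m₂ ≤ m0) {f g : α → E} (hf : Integrable f μ) (hg : Integrable g μ)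
    (hgm : AEStronglyMeasurable[m₁ ⊔ m₂] g μ)
    (h : ∀ s t, MeasurableSet[m₁] s → MeasurableSet[m₂] t →
      ∫ x in s ∩ t, g x ∂μ = ∫ x in s ∩ t, f x ∂μ) :
    g =ᵐ[μ] μ[f | m₁ ⊔ m₂] := by
  have hbasic : ∀ u ∈ Set.image2 (· ∩ ·) {s | MeasurableSet[m₁] s} {t | MeasurableSet[m₂] t},
      ∫ x in u, g x ∂μ = ∫ x in u, f x ∂μ := by
    rintro _ ⟨s, hs, t, ht, rfl⟩
    exact h s t hs ht
  have huniv : ∫ x, g x ∂μ = ∫ x, f x ∂μ := by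
    simpa using h Set.univ Set.univ .univ .univ
  exact ae_eq_condExp_of_forall_setIntegral_eq (sup_le hm₁ hm₂) hf (fun _ _ _ ↦ hg.integrableOn)
    (fun s hs _ ↦ setIntegral_eq_setIntegral_of_isPiSystem (sup_le hm₁ hm₂)
      (sup_eq_generateFrom_image2_inter m₁ m₂) (isPiSystem_image2_inter m₁ m₂) hg hf hbasic
      huniv s hs) hgm

end Integral

section CondExp

variable {α : Type*} {m m0 : MeasurableSpace α} {μ : Measure α}

theorem setIntegral_mul_condExp (hm : m ≤ m0) [SigmaFinite (μ.trim hm)] {s : Set α}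
    (hs : MeasurableSet[m] s) {c u : α → ℝ} (hc : AEStronglyMeasurable[m] c μ)
    (hcu : Integrable (c * u) μ) (hu : Integrable u μ) :
    ∫ x in s, c x * μ[u | m] x ∂μ = ∫ x in s, c x * u x ∂μ :=
  (integral_congr_ae <| ae_restrict_of_ae
    (condExp_mul_of_aestronglyMeasurable_left hc hcu hu).symm).trans
    (setIntegral_condExp hm hcu hs)

theorem integral_mul_condExp (hm : m ≤ m0) [SigmaFinite (μ.trim hm)] {c u : α → ℝ}
    (hc : AEStronglyMeasurable[m] c μ) (hcu : Integrable (c * u) μ) (hu : Integrable u μ) :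
    ∫ x, c x * μ[u | m] x ∂μ = ∫ x, c x * u x ∂μ := by
  simpa using setIntegral_mul_condExp hm .univ hc hcu hu

theorem condExp_ae_eq_condExp_of_aestronglyMeasurable {mD mL : MeasurableSpace α}
    [IsFiniteMeasure μ] (hDL : mD ≤ mL) (hL : mL ≤ m0) {u : α → ℝ}
    (h : AEStronglyMeasurable[mD] (μ[u | mL]) μ) : μ[u | mL] =ᵐ[μ] μ[u | mD] :=
  (condExp_of_aestronglyMeasurable' (hDL.trans hL) h integrable_condExp).symm.trans
    (condExp_condExp_of_le hDL hL)

theorem ae_norm_condExp_indicator_one_le [IsFiniteMeasure μ] (s : Set α) :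
    ∀ᵐ x ∂μ, ‖μ[s.indicator (1 : α → ℝ) | m] x‖ ≤ 1 := by
  simpa using ae_bdd_abs_condExp_of_ae_bdd_abs (m := m) (μ := μ) (R := 1)
    (f := s.indicator (1 : α → ℝ)) (ae_of_all _ fun x ↦ by by_cases hx : x ∈ s <;> simp [hx])

end CondExp

section CondIndep

variable {α : Type*} {m0 : MeasurableSpace α} {μ : Measure α}

theorem setIntegral_mul_indicator_one {s t : Set α} (ht : MeasurableSet t) (c : α → ℝ) :
    ∫ x in s, c x * t.indicator 1 x ∂μ = ∫ x in s ∩ t, c x ∂μ := by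
  rw [← setIntegral_indicator ht]
  congr 1 with x
  by_cases hx : x ∈ t <;> simp [hx]

theorem Integrable.mul_indicator_one {c : α → ℝ} (hc : Integrable c μ) {s : Set α}
    (hs : MeasurableSet s) : Integrable (c * s.indicator 1) μ := by
  have : c * s.indicator 1 = s.indicator c := by
    ext x; by_cases hx : x ∈ s <;> simp [hx]
  exact this ▸ hc.indicator hs

variable [IsFiniteMeasure μ]

theorem integrable_indicator_one {s : Set α} (hs : MeasurableSet s) :
    Integrable (s.indicator (1 : α → ℝ)) μ :=
  (integrable_const 1).indicator hs

variable {mY mD mL : MeasurableSpace α}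

theorem condExp_indicator_one_sup_ae_eq (hY : mY ≤ m0) (hDL : mD ≤ mL) (hL : mL ≤ m0)
    (hYL : ∀ s, MeasurableSet[mY] s →
      μ[s.indicator 1 | mL] =ᵐ[μ] μ[s.indicator (1 : α → ℝ) | mD])
    {t : Set α} (ht : MeasurableSet[mL] t) :
    μ[t.indicator 1 | mY ⊔ mD] =ᵐ[μ] μ[t.indicator (1 : α → ℝ) | mD] := by
  have hD := hDL.trans hL
  set e := μ[t.indicator (1 : α → ℝ) | mD]
  have he_sm : StronglyMeasurable[mD] e := stronglyMeasurable_condExp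
  refine (ae_eq_condExp_sup_of_forall_setIntegral_inter_eq hY hD
    (integrable_indicator_one (hL t ht)) integrable_condExp
    (he_sm.mono (le_sup_right (a := mY))).aestronglyMeasurable fun K M hK hM ↦ ?_).symm
  have hK₀ := hY K hK
  calc ∫ x in K ∩ M, e x ∂μ
      = ∫ x in M, e x * μ[K.indicator 1 | mL] x ∂μ := by
        rw [setIntegral_mul_condExp hL (hDL M hM)
          (he_sm.mono hDL).aestronglyMeasurable (integrable_condExp.mul_indicator_one hK₀)
          (integrable_indicator_one hK₀),
          setIntegral_mul_indicator_one hK₀, Set.inter_comm]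
    _ = ∫ x in M, μ[K.indicator 1 | mD] x * e x ∂μ := by
        refine integral_congr_ae (ae_restrict_of_ae ?_)
        filter_upwards [hYL K hK] with x hx
        rw [hx, mul_comm]
    _ = ∫ x in M, μ[K.indicator 1 | mL] x * t.indicator 1 x ∂μ := by
        rw [setIntegral_mul_condExp hD hM stronglyMeasurable_condExp.aestronglyMeasurable
          (integrable_condExp.mul_indicator_one (hL t ht)) (integrable_indicator_one (hL t ht))]
        refine integral_congr_ae (ae_restrict_of_ae ?_)
        filter_upwards [hYL K hK] with x hx
        rw [hx]
    _ = ∫ x in K ∩ M, t.indicator 1 x ∂μ := by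
        simp only [mul_comm (μ[K.indicator 1 | mL] _)]
        rw [setIntegral_mul_condExp hL (hDL M hM) (c := t.indicator 1)
          (stronglyMeasurable_const.indicator ht).aestronglyMeasurable
          ((integrable_indicator_one (hL t ht)).mul_indicator_one hK₀)
          (integrable_indicator_one hK₀), setIntegral_mul_indicator_one hK₀, Set.inter_comm]

theorem condExp_sup_ae_eq_condExp_sup (hY : mY ≤ m0) (hDL : mD ≤ mL) (hL : mL ≤ m0)
    (hYL : ∀ s, MeasurableSet[mY] s →
      μ[s.indicator 1 | mL] =ᵐ[μ] μ[s.indicator (1 : α → ℝ) | mD])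
    {f : α → ℝ} (hf : Integrable f μ)
    (hfL : ∀ s, MeasurableSet[mY] s → μ[s.indicator f | mL] =ᵐ[μ] μ[s.indicator f | mD]) :
    μ[f | mY ⊔ mL] =ᵐ[μ] μ[f | mY ⊔ mD] := by
  have hD := hDL.trans hL
  have hYD := sup_le hY hD
  set g := μ[f | mY ⊔ mD]
  refine (ae_eq_condExp_sup_of_forall_setIntegral_inter_eq hY hL hf integrable_condExp
    (stronglyMeasurable_condExp.mono (sup_le_sup_left hDL mY) :
      StronglyMeasurable[mY ⊔ mL] g).aestronglyMeasurable fun K L hK hL' ↦ ?_).symm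
  set e := μ[L.indicator (1 : α → ℝ) | mD]
  set v := K.indicator f
  have hK₀ := hY K hK
  have hL₀ := hL L hL'
  have hv : Integrable v μ := hf.indicator hK₀
  have he : ∀ᵐ x ∂μ, ‖e x‖ ≤ 1 := ae_norm_condExp_indicator_one_le L
  have he_sm : StronglyMeasurable[mD] e := stronglyMeasurable_condExp
  calc ∫ x in K ∩ L, g x ∂μ
      = ∫ x in K, g x * μ[L.indicator 1 | mY ⊔ mD] x ∂μ := by
        rw [setIntegral_mul_condExp hYD (le_sup_left (b := mD) K hK)
          stronglyMeasurable_condExp.aestronglyMeasurable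
          (integrable_condExp.mul_indicator_one hL₀) (integrable_indicator_one hL₀),
          setIntegral_mul_indicator_one hL₀]
    _ = ∫ x in K, e x * g x ∂μ := by
        refine integral_congr_ae (ae_restrict_of_ae ?_)
        filter_upwards [condExp_indicator_one_sup_ae_eq hY hDL hL hYL hL'] with x hx
        rw [hx, mul_comm]
    _ = ∫ x, e x * v x ∂μ := by
        rw [setIntegral_mul_condExp hYD (le_sup_left (b := mD) K hK)
          (he_sm.mono (le_sup_right (a := mY))).aestronglyMeasurable
          (hf.bdd_mul (he_sm.mono hD).aestronglyMeasurable he) hf, ← integral_indicator hK₀]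
        congr 1 with x
        by_cases hx : x ∈ K <;> simp [v, hx]
    _ = ∫ x, μ[v | mD] x * L.indicator 1 x ∂μ := by
        rw [← integral_mul_condExp hD stronglyMeasurable_condExp.aestronglyMeasurable
          (hv.bdd_mul (he_sm.mono hD).aestronglyMeasurable he) hv, ← integral_mul_condExp hD
          stronglyMeasurable_condExp.aestronglyMeasurable
          (integrable_condExp.mul_indicator_one hL₀) (integrable_indicator_one hL₀)]
        exact integral_congr_ae (ae_of_all _ fun x ↦ mul_comm _ _)
    _ = ∫ x in L, μ[v | mL] x ∂μ := by
        rw [← setIntegral_univ, setIntegral_mul_indicator_one hL₀, Set.univ_inter]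
        exact integral_congr_ae (ae_restrict_of_ae (hfL K hK).symm)
    _ = ∫ x in K ∩ L, f x ∂μ := by
        rw [setIntegral_condExp hL hv hL', setIntegral_indicator hK₀, Set.inter_comm]

end CondIndep

end MeasureTheory

theorem stmt_14 {X Y Λ : Type*} [MeasurableSpace X] [MeasurableSpace Y]
    [mΛ : MeasurableSpace Λ]
    (p : Measure (X × Y × Λ)) [IsProbabilityMeasure p]
    (D : MeasurableSpace Λ) (hDsub : D ≤ mΛ)
    -- the σ-algebras ℒ, 𝒴 ⊗ ℒ, 𝒴 ⊗ 𝒟 on the product space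
    (mL mYL mYD : MeasurableSpace (X × Y × Λ))
    (hL : mL = MeasurableSpace.comap (fun ω : X × Y × Λ => ω.2.2) mΛ)
    (hYL : mYL = (MeasurableSpace.comap (fun ω : X × Y × Λ => ω.2.1) inferInstance) ⊔
      (MeasurableSpace.comap (fun ω : X × Y × Λ => ω.2.2) mΛ))
    (hYD : mYD = (MeasurableSpace.comap (fun ω : X × Y × Λ => ω.2.1) inferInstance) ⊔
      (MeasurableSpace.comap (fun ω : X × Y × Λ => ω.2.2) D))
    -- conditional probabilities of rectangles given ℒ factor through 𝒟
    (hfac : ∀ (J : Set X) (K : Set Y), MeasurableSet J → MeasurableSet K →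
      ∃ g : Λ → ℝ, Measurable[D] g ∧
        p[Set.indicator {w : X × Y × Λ | w.1 ∈ J ∧ w.2.1 ∈ K} (fun _ => (1 : ℝ)) | mL]
          =ᵐ[p] (fun ω => g ω.2.2)) :
    ∀ J : Set X, MeasurableSet J →
      p[Set.indicator {w : X × Y × Λ | w.1 ∈ J} (fun _ => (1 : ℝ)) | mYL]
        =ᵐ[p]
      p[Set.indicator {w : X × Y × Λ | w.1 ∈ J} (fun _ => (1 : ℝ)) | mYD] := by
  subst hL hYL hYD
  have hDL := comap_mono (g := fun ω : X × Y × Λ => ω.2.2) hDsub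
  have hrect : ∀ J K, MeasurableSet J → MeasurableSet K →
      p[{w : X × Y × Λ | w.1 ∈ J ∧ w.2.1 ∈ K}.indicator (fun _ => (1 : ℝ)) |
          MeasurableSpace.comap (fun ω => ω.2.2) mΛ] =ᵐ[p]
        p[{w : X × Y × Λ | w.1 ∈ J ∧ w.2.1 ∈ K}.indicator (fun _ => (1 : ℝ)) |
          MeasurableSpace.comap (fun ω => ω.2.2) D] := by
    intro J K hJ hK
    obtain ⟨g, hg, hgL⟩ := hfac J K hJ hK
    exact condExp_ae_eq_condExp_of_aestronglyMeasurable hDL measurable_snd.snd.comap_le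
      ⟨_, (hg.comp (comap_measurable _)).stronglyMeasurable, hgL⟩
  intro J hJ
  refine condExp_sup_ae_eq_condExp_sup measurable_snd.fst.comap_le hDL
    measurable_snd.snd.comap_le ?_ ((integrable_const 1).indicator (measurable_fst hJ)) ?_
  · rintro _ ⟨K, hK, rfl⟩
    have hK' : (fun ω : X × Y × Λ => ω.2.1) ⁻¹' K = {w | w.1 ∈ Set.univ ∧ w.2.1 ∈ K} := by
      ext; simp
    rw [hK']
    exact hrect Set.univ K .univ hK
  · rintro _ ⟨K, hK, rfl⟩
    rw [Set.indicator_indicator]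
    have hJK : (fun ω : X × Y × Λ => ω.2.1) ⁻¹' K ∩ {w | w.1 ∈ J} =
        {w | w.1 ∈ J ∧ w.2.1 ∈ K} := by
      ext; simp [and_comm]
    rw [hJK]
    exact hrect J K hJ hK
end
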